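/- Let G be a finite metabelian group and g ∈ G. Then the minimal left Engel sink of g^{-1} is contained in the minimal right Engel sink of g: 𝓛(g^{-1}) ⊆ 𝓡(g). -/

import Mathlib

open scoped commutatorElement

/-- Iterated left Engel commutator `[x, _n h]` of elements, with `[x, _0 h] = x`. -/
def lEngel {H : Type} [Group H] (h : H) : H → ℕ → H
  | x, 0 => x
  | x, n + 1 => ⁅lEngel h x n, h⁆

/-- Iterated right Engel commutator `[a, _n x]`, with `[a, _0 x] = a`. -/
def rEngel {H : Type} [Group H] (a : H) : H → ℕ → H
  | x, 0 => a
  | x, n + 1 => ⁅rEngel a x n, x⁆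

/-- A left Engel sink of `h`. -/
def IsLeftEngelSink {H : Type} [Group H] (h : H) (L : Set H) : Prop :=
  ∀ x : H, ∃ N : ℕ, ∀ n ≥ N, lEngel h x n ∈ L

/-- The minimal left Engel sink of `h`. -/
def IsMinLeftEngelSink {H : Type} [Group H] (h : H) (L : Set H) : Prop :=
  IsLeftEngelSink h L ∧ ∀ L' : Set H, IsLeftEngelSink h L' → L ⊆ L'

/-- A right Engel sink of `a`. -/
def IsRightEngelSink {H : Type} [Group H] (a : H) (R : Set H) : Prop :=
  ∀ x : H, ∃ N : ℕ, ∀ n ≥ N, rEngel a x n ∈ R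

/-- The minimal right Engel sink of `a`. -/
def IsMinRightEngelSink {H : Type} [Group H] (a : H) (R : Set H) : Prop :=
  IsRightEngelSink a R ∧ ∀ R' : Set H, IsRightEngelSink a R' → R ⊆ R'

/-!
Put `y = g⁻¹ ⁅x, g⁻¹⁆`. Then `⁅g, y⁆ = ⁅⁅x, g⁻¹⁆, g⁻¹⁆`, and from there on every commutator
with `y` equals the commutator with `g⁻¹`, because the extra factor `⁅x, g⁻¹⁆` lies in `G'` and
so commutes with the terms of the sequence, which lie in `G'` as well. Hence the right Engel
sequence of `g` along `y` is a shift of the left Engel sequence of `x` along `g⁻¹`, so every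
right Engel sink of `g` is a left Engel sink of `g⁻¹`, and minimality gives the inclusion.
-/

lemma commutatorElement_mul_right_of_commute {G : Type} [Group G] {c l : G} (h : G)
    (hcl : Commute c l) : ⁅c, h * l⁆ = ⁅c, h⁆ := by
  simp only [commutatorElement_def, mul_inv_rev]
  calc c * (h * l) * c⁻¹ * (l⁻¹ * h⁻¹)
      = c * h * (l * c⁻¹ * l⁻¹) * h⁻¹ := by group
    _ = c * h * (c⁻¹ * l * l⁻¹) * h⁻¹ := by rw [(hcl.inv_left).symm.eq]
    _ = c * h * c⁻¹ * h⁻¹ := by group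

lemma commutatorElement_inv_mul_right {G : Type} [Group G] (g l : G) :
    ⁅g, g⁻¹ * l⁆ = ⁅l, g⁻¹⁆ := by
  simp only [commutatorElement_def, mul_inv_rev]
  group

lemma commutatorElement_mem_commutator {G : Type} [Group G] (a b : G) :
    ⁅a, b⁆ ∈ commutator G := by
  rw [commutator_def]
  exact Subgroup.commutator_mem_commutator (Subgroup.mem_top a) (Subgroup.mem_top b)

lemma rEngel_inv_mul_eq_lEngel {G : Type} [Group G]
    (hmeta : ∀ x ∈ commutator G, ∀ y ∈ commutator G, x * y = y * x) (g x : G) (n : ℕ) :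
    rEngel g (g⁻¹ * ⁅x, g⁻¹⁆) (n + 1) = lEngel g⁻¹ x (n + 2) := by
  induction n with
  | zero => exact commutatorElement_inv_mul_right g _
  | succ n ih =>
    change ⁅rEngel g _ (n + 1), g⁻¹ * ⁅x, g⁻¹⁆⁆ = ⁅lEngel g⁻¹ x (n + 2), g⁻¹⁆
    rw [ih]
    exact commutatorElement_mul_right_of_commute g⁻¹
      (hmeta _ (commutatorElement_mem_commutator _ _) _ (commutatorElement_mem_commutator _ _))

lemma IsRightEngelSink.isLeftEngelSink_inv {G : Type} [Group G]
    (hmeta : ∀ x ∈ commutator G, ∀ y ∈ commutator G, x * y = y * x) {g : G} {R : Set G}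
    (hR : IsRightEngelSink g R) : IsLeftEngelSink g⁻¹ R := by
  intro x
  obtain ⟨N, hN⟩ := hR (g⁻¹ * ⁅x, g⁻¹⁆)
  refine ⟨N + 2, fun n hn => ?_⟩
  obtain ⟨m, rfl⟩ : ∃ m, n = m + 2 := ⟨n - 2, by omega⟩
  rw [← rEngel_inv_mul_eq_lEngel hmeta]
  exact hN (m + 1) (by omega)

theorem stmt9_general (G : Type) [Group G]
    (hmeta : ∀ x ∈ commutator G, ∀ y ∈ commutator G, x * y = y * x) (g : G)
    (L R : Set G) (hL : IsMinLeftEngelSink g⁻¹ L) (hR : IsMinRightEngelSink g R) :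
    L ⊆ R :=
  hL.2 R (hR.1.isLeftEngelSink_inv hmeta)

/-- In a finite metabelian group, `𝓛(g⁻¹) ⊆ 𝓡(g)`. -/
theorem stmt9 (G : Type) [Group G] [Finite G]
    (hmeta : ∀ x ∈ commutator G, ∀ y ∈ commutator G, x * y = y * x) (g : G)
    (L R : Set G) (hL : IsMinLeftEngelSink g⁻¹ L) (hR : IsMinRightEngelSink g R) :
    L ⊆ R :=
  stmt9_general G hmeta g L R hL hR
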